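/- Let v_1,…,v_q ∈ ℝⁿ be such that P := conv{v_1,…,v_q} has nonempty interior, let V ∈ ℝ^{n×q} be the matrix with columns v_i, and let (Ω, μ) be a finite measure space. If η : Ω → ℝⁿ is measurable and essentially bounded with η(x) ∈ P for a.e. x ∈ Ω and ess inf_{x∈Ω} dist(η(x), ∂P) > 0, then there exists a measurable, essentially bounded ψ : Ω → ℝⁿ such that η(x) = V softmax(Vᵀψ(x)) for a.e. x ∈ Ω. -/

import Mathlib

open Real MeasureTheory
open scoped RealInnerProductSpace

/-- The softmax map `softmax(y)_i = exp(y_i) / Σ_j exp(y_j)`. -/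
noncomputable def softmax {m : ℕ} (y : Fin m → ℝ) : Fin m → ℝ :=
  fun i => Real.exp (y i) / ∑ j, Real.exp (y j)

/-- The latent-to-design map `Φ(y) = V softmax (Vᵀ y) = Σ_i softmax(Vᵀy)_i v_i`,
where `(Vᵀy)_i = ⟨v_i, y⟩`. -/
noncomputable def Phi {n q : ℕ} (v : Fin q → EuclideanSpace ℝ (Fin n))
    (y : EuclideanSpace ℝ (Fin n)) : EuclideanSpace ℝ (Fin n) :=
  ∑ i, softmax (fun i : Fin q => ⟪v i, y⟫) i • v i

/-!
`Phi v` is the gradient of the log-sum-exp function `L y = log ∑ i, exp ⟪v i, y⟫`. Because the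
`v i` affinely span the space, Gibbs' inequality makes `L` strictly convex along every line, so
`Phi v` is injective. If the closed ball of radius `r` about `p` lies in the hull, then the support
function of the hull, which is below `L`, gives `L y - ⟪p, y⟫ ≥ r ‖y‖`; this coercive function has
a global minimiser `y`, where `Phi v y = p` and `‖y‖ ≤ log q / r`. With `r = ε / 2` this solves
`Phi v ψ = η` pointwise a.e. with a uniform bound, and `ψ` is measurable because a continuous
injection of `ℝⁿ` is a measurable embedding.
-/

open Set Metric Filter

theorem ball_subset_of_le_infDist_frontier {E : Type*} [NormedAddCommGroup E] [NormedSpace ℝ E]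
    [FiniteDimensional ℝ E] {s : Set E} {x : E} {ε : ℝ} (hx : x ∈ s)
    (h : ε ≤ infDist x (frontier s)) : ball x ε ⊆ s := by
  by_cases hs : s = univ
  · exact hs ▸ subset_univ _
  obtain ⟨y, hy, hxy⟩ := exists_mem_frontier_infDist_compl_eq_dist hx hs
  refine (ball_subset_ball ?_).trans ball_infDist_compl_subset
  exact h.trans (hxy ▸ infDist_le_dist_of_mem hy)

theorem exists_inner_ne_of_interior_convexHull_nonempty {ι E : Type*} [NormedAddCommGroup E]
    [InnerProductSpace ℝ E] [FiniteDimensional ℝ E] {v : ι → E}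
    (hint : (interior (convexHull ℝ (range v))).Nonempty) {d : E} (hd : d ≠ 0) :
    ∃ j k, ⟪v j, d⟫ ≠ ⟪v k, d⟫ := by
  by_contra! hconst
  have hspan : vectorSpan ℝ (range v) = ⊤ := by
    rw [← direction_affineSpan, interior_convexHull_nonempty_iff_affineSpan_eq_top.mp hint,
      AffineSubspace.direction_top]
  have hperp : vectorSpan ℝ (range v) ≤ (ℝ ∙ d)ᗮ := by
    rw [vectorSpan_def, Submodule.span_le]
    rintro _ ⟨_, ⟨j, rfl⟩, _, ⟨k, rfl⟩, rfl⟩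
    rw [SetLike.mem_coe, Submodule.mem_orthogonal_singleton_iff_inner_right]
    change ⟪d, v j - v k⟫ = 0
    rw [inner_sub_right, real_inner_comm (v j), real_inner_comm (v k), hconst j k, sub_self]
  have hdd : d ∈ (ℝ ∙ d)ᗮ := hperp (hspan ▸ Submodule.mem_top)
  rw [Submodule.mem_orthogonal_singleton_iff_inner_right, inner_self_eq_zero] at hdd
  exact hd hdd

section LogSumExp

variable {ι E : Type*} [Fintype ι] [NormedAddCommGroup E] [InnerProductSpace ℝ E]

noncomputable def logSumExp (v : ι → E) (w : E) : ℝ :=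
  Real.log (∑ i, Real.exp ⟪v i, w⟫)

theorem sum_exp_inner_pos [Nonempty ι] (v : ι → E) (w : E) : 0 < ∑ i, Real.exp ⟪v i, w⟫ :=
  Finset.sum_pos (fun _ _ => Real.exp_pos _) Finset.univ_nonempty

theorem logSumExp_zero (v : ι → E) : logSumExp v 0 = Real.log (Fintype.card ι) := by
  simp [logSumExp]

theorem inner_le_logSumExp {v : ι → E} {z : E} (hz : z ∈ convexHull ℝ (range v)) (w : E) :
    ⟪z, w⟫ ≤ logSumExp v w := by
  refine convexHull_min ?_ (convex_halfSpace_le ((innerₗ E).flip w).isLinear _) hz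
  rintro _ ⟨i, rfl⟩
  have hle : Real.exp ⟪v i, w⟫ ≤ ∑ j, Real.exp ⟪v j, w⟫ :=
    Finset.single_le_sum (f := fun j => Real.exp ⟪v j, w⟫) (fun j _ => (Real.exp_pos _).le)
      (Finset.mem_univ i)
  exact (Real.le_log_iff_exp_le ((Real.exp_pos _).trans_le hle)).mpr hle

theorem mul_norm_le_logSumExp_sub_inner {v : ι → E} {p : E} {r : ℝ} (hr : 0 ≤ r)
    (hball : closedBall p r ⊆ convexHull ℝ (range v)) (w : E) :
    r * ‖w‖ ≤ logSumExp v w - ⟪p, w⟫ := by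
  rcases eq_or_ne w 0 with rfl | hw
  · simpa using inner_le_logSumExp (hball (mem_closedBall_self hr)) 0
  have hw' : 0 < ‖w‖ := norm_pos_iff.mpr hw
  set z := p + (r / ‖w‖) • w
  have hz : z ∈ closedBall p r := by
    rw [mem_closedBall, dist_eq_norm, add_sub_cancel_left, norm_smul, Real.norm_of_nonneg
      (by positivity), div_mul_cancel₀ _ hw'.ne']
  have hzw : ⟪z, w⟫ = ⟪p, w⟫ + r * ‖w‖ := by
    rw [inner_add_left, real_inner_smul_left, real_inner_self_eq_norm_sq]
    field_simp
  linarith [inner_le_logSumExp (hball hz) w]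

end LogSumExp

section Phi

variable {n q : ℕ} (v : Fin q → EuclideanSpace ℝ (Fin n))

theorem inner_Phi (y w : EuclideanSpace ℝ (Fin n)) :
    ⟪Phi v y, w⟫ = ∑ i, softmax (fun i => ⟪v i, y⟫) i * ⟪v i, w⟫ := by
  simp only [Phi, sum_inner, real_inner_smul_left]

theorem continuous_Phi : Continuous (Phi v) :=
  continuous_finsetSum _ fun i _ =>
    have : Nonempty (Fin q) := ⟨i⟩
    ((by fun_prop : Continuous fun y => Real.exp ⟪v i, y⟫).div (by fun_prop)
      fun y => (sum_exp_inner_pos v y).ne').smul continuous_const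

/-- Strict Jensen for `log`, with the softmax weights at `y`. -/
theorem inner_Phi_sub_lt_logSumExp_sub {y z : EuclideanSpace ℝ (Fin n)}
    (hne : ∃ j k, ⟪v j, z - y⟫ ≠ ⟪v k, z - y⟫) :
    ⟪Phi v y, z - y⟫ < logSumExp v z - logSumExp v y := by
  obtain ⟨j, k, hjk⟩ := hne
  have : Nonempty (Fin q) := ⟨j⟩
  have hZy := sum_exp_inner_pos v y
  have hZz := sum_exp_inner_pos v z
  set s := softmax (fun i => ⟪v i, y⟫)
  have hs_pos : ∀ i ∈ Finset.univ, 0 < s i := fun i _ => div_pos (Real.exp_pos _) hZy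
  have hs_sum : ∑ i, s i = 1 := by
    simp only [s, softmax, ← Finset.sum_div, div_self hZy.ne']
  have hjensen := strictConcaveOn_log_Ioi.lt_map_sum hs_pos hs_sum
    (fun i _ => Real.exp_pos ⟪v i, z - y⟫)
    ⟨j, Finset.mem_univ _, k, Finset.mem_univ _, Real.exp_injective.ne hjk⟩
  have hmean : ∑ i, s i • Real.exp ⟪v i, z - y⟫ =
      (∑ i, Real.exp ⟪v i, z⟫) / ∑ i, Real.exp ⟪v i, y⟫ := by
    rw [Finset.sum_div]
    refine Finset.sum_congr rfl fun i _ => ?_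
    rw [smul_eq_mul, inner_sub_right, Real.exp_sub]
    simp only [s, softmax]
    field_simp
  simp only [smul_eq_mul, Real.log_exp] at hjensen
  rwa [inner_Phi, logSumExp, logSumExp, ← Real.log_div hZz.ne' hZy.ne', ← hmean]

theorem Phi_injective (hint : (interior (convexHull ℝ (Set.range v))).Nonempty) :
    Function.Injective (Phi v) := by
  intro y z hyz
  by_contra hne
  have hyz' := inner_Phi_sub_lt_logSumExp_sub v
    (exists_inner_ne_of_interior_convexHull_nonempty hint (sub_ne_zero.mpr (Ne.symm hne)))
  have hzy := inner_Phi_sub_lt_logSumExp_sub v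
    (exists_inner_ne_of_interior_convexHull_nonempty hint (sub_ne_zero.mpr hne))
  have hsum : ⟪Phi v z, z - y⟫ + ⟪Phi v z, y - z⟫ = 0 := by
    rw [← inner_add_right, sub_add_sub_cancel, sub_self, inner_zero_right]
  rw [hyz] at hyz'
  linarith

theorem hasFDerivAt_logSumExp [Nonempty (Fin q)] (y : EuclideanSpace ℝ (Fin n)) :
    HasFDerivAt (logSumExp v) (innerSL ℝ (Phi v y)) y := by
  have hZ : HasFDerivAt (fun w => ∑ i, Real.exp ⟪v i, w⟫)
      (∑ i, Real.exp ⟪v i, y⟫ • innerSL ℝ (v i)) y :=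
    HasFDerivAt.fun_sum fun i _ => (innerSL ℝ (v i)).hasFDerivAt.exp
  have hgrad : innerSL ℝ (Phi v y) =
      (∑ i, Real.exp ⟪v i, y⟫)⁻¹ • ∑ i, Real.exp ⟪v i, y⟫ • innerSL ℝ (v i) := by
    ext w
    simp only [innerSL_apply_apply, inner_Phi, smul_apply,
      FunLike.coe_sum, Finset.sum_apply, smul_eq_mul, Finset.mul_sum, softmax]
    exact Finset.sum_congr rfl fun i _ => by ring
  rw [hgrad]
  exact hZ.log (sum_exp_inner_pos v y).ne'

theorem Phi_eq_of_isLocalMin [Nonempty (Fin q)] {p y : EuclideanSpace ℝ (Fin n)}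
    (hmin : IsLocalMin (fun w => logSumExp v w - ⟪p, w⟫) y) : Phi v y = p := by
  have hD := hmin.hasFDerivAt_eq_zero ((hasFDerivAt_logSumExp v y).sub (innerSL ℝ p).hasFDerivAt)
  rw [← map_sub] at hD
  have hnorm := congrArg norm hD
  rwa [innerSL_apply_norm, norm_zero, norm_eq_zero, sub_eq_zero] at hnorm

theorem exists_Phi_eq_of_closedBall_subset {p : EuclideanSpace ℝ (Fin n)} {r : ℝ} (hr : 0 < r)
    (hball : closedBall p r ⊆ convexHull ℝ (range v)) :
    ∃ y, ‖y‖ ≤ Real.log q / r ∧ Phi v y = p := by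
  obtain ⟨_, ⟨i, -⟩⟩ := convexHull_nonempty_iff.mp ⟨p, hball (mem_closedBall_self hr.le)⟩
  have : Nonempty (Fin q) := ⟨i⟩
  set F := fun w => logSumExp v w - ⟪p, w⟫
  have hcoercive := mul_norm_le_logSumExp_sub_inner hr.le hball
  have hcont : Continuous F :=
    (continuous_iff_continuousAt.mpr fun y => (hasFDerivAt_logSumExp v y).continuousAt).sub
      (by fun_prop)
  obtain ⟨y, hy⟩ := hcont.exists_forall_le <|
    tendsto_atTop_mono hcoercive (tendsto_norm_cocompact_atTop.const_mul_atTop hr)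
  refine ⟨y, ?_, Phi_eq_of_isLocalMin v (Eventually.of_forall hy)⟩
  have hF0 : F 0 = Real.log q := by simp [F, logSumExp_zero]
  rw [le_div_iff₀' hr]
  linarith [hcoercive y, hy 0]

end Phi

theorem latent_parametrization_exists_general {n q : ℕ}
    (v : Fin q → EuclideanSpace ℝ (Fin n))
    (hint : (interior (convexHull ℝ (Set.range v))).Nonempty)
    {Ω : Type*} [MeasurableSpace Ω] (μ : Measure Ω)
    (η : Ω → EuclideanSpace ℝ (Fin n)) (hmeas : Measurable η)
    (hP : ∀ᵐ x ∂μ, η x ∈ convexHull ℝ (Set.range v))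
    (hdist : ∃ ε > 0, ∀ᵐ x ∂μ,
      ε ≤ Metric.infDist (η x) (frontier (convexHull ℝ (Set.range v)))) :
    ∃ ψ : Ω → EuclideanSpace ℝ (Fin n), Measurable ψ ∧
      (∃ C : ℝ, ∀ᵐ x ∂μ, ‖ψ x‖ ≤ C) ∧
      ∀ᵐ x ∂μ, η x = Phi v (ψ x) := by
  obtain ⟨ε, hε, hdist⟩ := hdist
  have hemb : MeasurableEmbedding (Phi v) :=
    (continuous_Phi v).measurableEmbedding (Phi_injective v hint)
  have hpre : ∀ᵐ x ∂μ, ∃ y, ‖y‖ ≤ Real.log q / (ε / 2) ∧ Phi v y = η x := by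
    filter_upwards [hP, hdist] with x hx hxε
    exact exists_Phi_eq_of_closedBall_subset v (half_pos hε)
      ((closedBall_subset_ball (half_lt_self hε)).trans (ball_subset_of_le_infDist_frontier hx hxε))
  refine ⟨hemb.invFun ∘ η, hemb.measurable_invFun.comp hmeas, ⟨Real.log q / (ε / 2), ?_⟩, ?_⟩
  · filter_upwards [hpre] with x ⟨y, hy, hyx⟩
    rwa [Function.comp_apply, ← hyx, hemb.leftInverse_invFun y]
  · filter_upwards [hpre] with x ⟨y, _, hyx⟩
    rw [Function.comp_apply, ← hyx, hemb.leftInverse_invFun y]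

/-- Let `P = conv {v_1, …, v_q} ⊂ ℝⁿ` have nonempty interior and let
`(Ω, μ)` be a finite measure space.  If `η : Ω → ℝⁿ` is measurable, essentially
bounded, takes values in `P` a.e., and satisfies `ess inf_x dist(η(x), ∂P) > 0`,
then there is a measurable, essentially bounded latent variable `ψ : Ω → ℝⁿ` with
`η(x) = V softmax (Vᵀ ψ(x))` for a.e. `x`. -/
theorem latent_parametrization_exists {n q : ℕ}
    (v : Fin q → EuclideanSpace ℝ (Fin n))
    (hint : (interior (convexHull ℝ (Set.range v))).Nonempty)
    {Ω : Type*} [MeasurableSpace Ω] (μ : Measure Ω) [IsFiniteMeasure μ]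
    (η : Ω → EuclideanSpace ℝ (Fin n)) (hmeas : Measurable η)
    (hbdd : ∃ C : ℝ, ∀ᵐ x ∂μ, ‖η x‖ ≤ C)
    (hP : ∀ᵐ x ∂μ, η x ∈ convexHull ℝ (Set.range v))
    (hdist : ∃ ε > 0, ∀ᵐ x ∂μ,
      ε ≤ Metric.infDist (η x) (frontier (convexHull ℝ (Set.range v)))) :
    ∃ ψ : Ω → EuclideanSpace ℝ (Fin n), Measurable ψ ∧
      (∃ C : ℝ, ∀ᵐ x ∂μ, ‖ψ x‖ ≤ C) ∧
      ∀ᵐ x ∂μ, η x = Phi v (ψ x) :=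
  latent_parametrization_exists_general v hint μ η hmeas hP hdist
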